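/- Let n ≥ 3 and let (a_1,...,a_{n+2}) be positive integers and ε ∈ {1,-1}. Then M_{n+2}(a_1,...,a_{n+2}) = ε·S if and only if M_{n+1}(a_2,...,a_{n+1}, a_1 + a_{n+2}) = ε·Id, where S = [[0,-1],[1,0]]. -/
import Mathlib


open Matrix

def E (a : ℤ) : Matrix (Fin 2) (Fin 2) ℤ := !![a, -1; 1, 0]

/-- `M [a₁, …, aₙ] = E aₙ * ⋯ * E a₁`. -/
def M (l : List ℤ) : Matrix (Fin 2) (Fin 2) ℤ :=
  (l.map E).foldl (fun acc x => x * acc) 1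

def S : Matrix (Fin 2) (Fin 2) ℤ := !![0, -1; 1, 0]

def T : Matrix (Fin 2) (Fin 2) ℤ := !![1, 1; 0, 1]

def F (a : ℤ) : Matrix (Fin 2) (Fin 2) ℤ := !![0, 1; -1, a]

lemma FE (a : ℤ) : F a * E a = 1 := by
  ext i j
  fin_cases i <;> fin_cases j <;>
    simp [F, E, Matrix.mul_apply, Fin.sum_univ_two, Matrix.one_apply]

lemma EF (a : ℤ) : E a * F a = 1 := by
  ext i j
  fin_cases i <;> fin_cases j <;>
    simp [F, E, Matrix.mul_apply, Fin.sum_univ_two, Matrix.one_apply]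

lemma foldl_mul (l : List (Matrix (Fin 2) (Fin 2) ℤ)) (a : Matrix (Fin 2) (Fin 2) ℤ) :
    l.foldl (fun acc x => x * acc) a = l.foldl (fun acc x => x * acc) 1 * a := by
  induction l generalizing a with
  | nil => simp
  | cons b l ih =>
    simp only [List.foldl_cons, one_mul, mul_one]
    rw [ih (b * a), ih b, mul_assoc]

lemma M_cons (x : ℤ) (l : List ℤ) : M (x :: l) = M l * E x := by
  simp only [M, List.map_cons, List.foldl_cons, one_mul, mul_one]
  exact foldl_mul _ _

lemma M_append_singleton (l : List ℤ) (y : ℤ) : M (l ++ [y]) = E y * M l := by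
  simp only [M, List.map_append, List.foldl_append, List.map_cons, List.map_nil,
    List.foldl_cons, List.foldl_nil]

lemma key1 (x y : ℤ) : E (x + y) * (F y * S * F x) = 1 := by
  ext i j
  fin_cases i <;> fin_cases j <;>
    simp [F, E, S, Matrix.mul_apply, Fin.sum_univ_two, Matrix.one_apply] <;> ring

lemma key2 (x y : ℤ) : E y * F (x + y) * E x = S := by
  ext i j
  fin_cases i <;> fin_cases j <;>
    simp [F, E, S, Matrix.mul_apply, Fin.sum_univ_two, Matrix.one_apply] <;> ring

theorem stmt9 (n : ℕ) (hn : 3 ≤ n) (x y : ℤ) (m : List ℤ) (hm : m.length = n)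
    (hx : 0 < x) (hy : 0 < y) (hpos : ∀ a ∈ m, 0 < a)
    (ε : ℤ) (hε : ε = 1 ∨ ε = -1) :
    M (x :: m ++ [y]) = ε • S ↔
      M (m ++ [x + y]) = ε • (1 : Matrix (Fin 2) (Fin 2) ℤ) := by
  have h1 : M (x :: m ++ [y]) = E y * M m * E x := by
    rw [List.cons_append, M_cons, M_append_singleton, mul_assoc]
  have h2 : M (m ++ [x + y]) = E (x + y) * M m := M_append_singleton m (x + y)
  rw [h1, h2]
  constructor
  · intro h
    have hA : M m = ε • (F y * S * F x) := by
      have := congrArg (fun X => F y * X * F x) h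
      simp only [Matrix.mul_smul, Matrix.smul_mul] at this
      rw [← mul_assoc, ← mul_assoc, FE, one_mul, mul_assoc, EF, mul_one] at this
      rw [this]
    rw [hA, Matrix.mul_smul, key1]
  · intro h
    have hA : M m = ε • F (x + y) := by
      have := congrArg (fun X => F (x + y) * X) h
      simp only [Matrix.mul_smul] at this
      rw [← mul_assoc, FE, one_mul, mul_one] at this
      rw [this]
    rw [hA, Matrix.mul_smul, Matrix.smul_mul, key2]
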